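/- Under the assumptions of the binary IV model with monotonicity (exclusion, independence given X, consistency, D(1) ≥ D(0) a.s., P(D(1)>D(0)|X) > 0, and E(D|Z=1,X) ≠ E(D|Z=0,X)): E[Y(1) - Y(0) | D(1) > D(0), X] = (E(Y|Z=1,X) - E(Y|Z=0,X)) / (E(D|Z=1,X) - E(D|Z=0,X)). -/

import Mathlib

open MeasureTheory ProbabilityTheory

/-- Conditional mean of `f` given the event `A`. -/
noncomputable def condMean {Ω : Type*} [MeasurableSpace Ω] (μ : Measure Ω)
    (A : Set Ω) (f : Ω → ℝ) : ℝ :=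
  (∫ ω in A, f ω ∂μ) / (μ A).toReal

/-! On the event `{Z = z}` the observed treatment is `D_z` and the observed outcome is
`Y0 + D_z * (Y1 - Y0)`, a function of `(Y0, Y1, D0, D1)`, which is independent of `Z`; so each
conditional mean given `Z = z` is an unconditional mean. Under monotonicity `D1 - D0` is the
indicator of the compliers `{D0 < D1}`, hence the two differences of means are
`E[(Y1 - Y0); D0 < D1]` and `P(D0 < D1)`, whose ratio is the complier mean. -/

lemma ite_eq_add_mul_sub {d y₀ y₁ : ℝ} (hd : d = 0 ∨ d = 1) :
    (if d = 1 then y₁ else y₀) = y₀ + d * (y₁ - y₀) := by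
  rcases hd with rfl | rfl <;> norm_num

lemma mul_sub_mul_eq_ite_lt {a b : ℝ} (ha : a = 0 ∨ a = 1) (hb : b = 0 ∨ b = 1) (hab : a ≤ b)
    (t : ℝ) : b * t - a * t = if a < b then t else 0 := by
  rcases ha with rfl | rfl <;> rcases hb with rfl | rfl <;> norm_num at hab <;> simp

section

variable {Ω : Type*} [MeasurableSpace Ω] {μ : Measure Ω}

lemma integral_sub_integral_eq_setIntegral {f g h : Ω → ℝ} {A : Set Ω} (hA : MeasurableSet A)
    (hf : Integrable f μ) (hg : Integrable g μ) (hfg : ∀ ω, f ω - g ω = A.indicator h ω) :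
    ∫ ω, f ω ∂μ - ∫ ω, g ω ∂μ = ∫ ω in A, h ω ∂μ := by
  rw [← integral_sub hf hg, ← integral_indicator hA]
  exact integral_congr_ae (ae_of_all _ hfg)

lemma setIntegral_preimage_of_indepFun {β : Type*} [MeasurableSpace β] {Z : Ω → β} {f : Ω → ℝ}
    {S : Set β} (hZ : Measurable Z) (hS : MeasurableSet S) (hindep : IndepFun Z f μ)
    (hf : AEStronglyMeasurable f μ) :
    ∫ ω in Z ⁻¹' S, f ω ∂μ = μ.real (Z ⁻¹' S) * ∫ ω, f ω ∂μ := by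
  have hmem : MeasurableSet (Z ⁻¹' S) := hZ hS
  have hindicator : Measurable (S.indicator (1 : β → ℝ)) := measurable_one.indicator hS
  have hprod : ∀ ω, (Z ⁻¹' S).indicator f ω = S.indicator 1 (Z ω) * f ω := fun ω => by
    by_cases h : Z ω ∈ S <;> simp [h]
  have hind : IndepFun (fun ω => S.indicator (1 : β → ℝ) (Z ω)) f μ :=
    hindep.comp hindicator measurable_id
  rw [← integral_indicator hmem, integral_congr_ae (ae_of_all _ hprod),
    hind.integral_fun_mul_eq_mul_integral (hindicator.comp hZ).aestronglyMeasurable hf]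
  simp_rw [← Set.indicator_comp_right, Function.comp_def, Pi.one_def]
  rw [integral_indicator_const 1 hmem, smul_eq_mul, mul_one]

lemma condMean_congr {A : Set Ω} {f g : Ω → ℝ} (hA : MeasurableSet A) (hfg : Set.EqOn f g A) :
    condMean μ A f = condMean μ A g := by
  rw [condMean, condMean, setIntegral_congr_fun hA hfg]

lemma condMean_preimage_of_indepFun [IsFiniteMeasure μ] {β : Type*} [MeasurableSpace β]
    {Z : Ω → β} {f : Ω → ℝ} {S : Set β} (hZ : Measurable Z) (hS : MeasurableSet S)
    (hindep : IndepFun Z f μ) (hf : AEStronglyMeasurable f μ) (hμ : μ (Z ⁻¹' S) ≠ 0) :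
    condMean μ (Z ⁻¹' S) f = ∫ ω, f ω ∂μ := by
  rw [condMean, setIntegral_preimage_of_indepFun hZ hS hindep hf, ← measureReal_def,
    mul_div_cancel_left₀ _ ((measureReal_ne_zero_iff).2 hμ)]

lemma condMean_preimage_eq_integral_comp [IsFiniteMeasure μ] {β γ : Type*} [MeasurableSpace β]
    [MeasurableSpace γ] {Z : Ω → β} {W : Ω → γ} {g : γ → ℝ} {f : Ω → ℝ} {S : Set β}
    (hZ : Measurable Z) (hS : MeasurableSet S) (hW : Measurable W) (hg : Measurable g)
    (hindep : IndepFun Z W μ) (hμ : μ (Z ⁻¹' S) ≠ 0)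
    (hfg : Set.EqOn f (fun ω => g (W ω)) (Z ⁻¹' S)) :
    condMean μ (Z ⁻¹' S) f = ∫ ω, g (W ω) ∂μ :=
  (condMean_congr (hZ hS) hfg).trans <|
    condMean_preimage_of_indepFun hZ hS (hindep.comp measurable_id hg)
      (hg.comp hW).aestronglyMeasurable hμ

lemma integral_add_mul_sub_integral_add_mul_eq_setIntegral [IsFiniteMeasure μ] {D₀ D₁ Y₀ τ : Ω → ℝ}
    (hD₀bin : ∀ ω, D₀ ω = 0 ∨ D₀ ω = 1) (hD₁bin : ∀ ω, D₁ ω = 0 ∨ D₁ ω = 1)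
    (hD₀ : Measurable D₀) (hD₁ : Measurable D₁) (hmono : ∀ ω, D₀ ω ≤ D₁ ω)
    (hY₀ : Integrable Y₀ μ) (hτ : Integrable τ μ) :
    ∫ ω, Y₀ ω + D₁ ω * τ ω ∂μ - ∫ ω, Y₀ ω + D₀ ω * τ ω ∂μ =
      ∫ ω in {ω | D₀ ω < D₁ ω}, τ ω ∂μ := by
  have hmul : ∀ {D : Ω → ℝ}, (∀ ω, D ω = 0 ∨ D ω = 1) → Measurable D →
      Integrable (fun ω => Y₀ ω + D ω * τ ω) μ := fun hbin hD =>
    hY₀.add <| hτ.bdd_mul (c := 1) hD.aestronglyMeasurable <| ae_of_all _ fun ω => by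
      rcases hbin ω with h | h <;> simp [h]
  refine integral_sub_integral_eq_setIntegral (measurableSet_lt hD₀ hD₁) (hmul hD₁bin hD₁)
    (hmul hD₀bin hD₀) fun ω => ?_
  rw [add_sub_add_left_eq_sub, mul_sub_mul_eq_ite_lt (hD₀bin ω) (hD₁bin ω) (hmono ω)]
  rfl

lemma integral_sub_integral_eq_measureReal_lt [IsFiniteMeasure μ] {D₀ D₁ : Ω → ℝ}
    (hD₀bin : ∀ ω, D₀ ω = 0 ∨ D₀ ω = 1) (hD₁bin : ∀ ω, D₁ ω = 0 ∨ D₁ ω = 1)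
    (hD₀ : Measurable D₀) (hD₁ : Measurable D₁) (hmono : ∀ ω, D₀ ω ≤ D₁ ω) :
    ∫ ω, D₁ ω ∂μ - ∫ ω, D₀ ω ∂μ = μ.real {ω | D₀ ω < D₁ ω} := by
  simpa using integral_add_mul_sub_integral_add_mul_eq_setIntegral (μ := μ) hD₀bin hD₁bin hD₀ hD₁
    hmono (integrable_const 0) (integrable_const 1)

end

theorem stmt_14_general {Ω : Type*} [MeasurableSpace Ω] (μ : Measure Ω) [IsProbabilityMeasure μ]
    (Z D Y D0 D1 Y0 Y1 : Ω → ℝ)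
    (hD0bin : ∀ ω, D0 ω = 0 ∨ D0 ω = 1) (hD1bin : ∀ ω, D1 ω = 0 ∨ D1 ω = 1)
    (hZ : Measurable Z) (hD0 : Measurable D0) (hD1 : Measurable D1)
    (hY0 : Measurable Y0) (hY1 : Measurable Y1)
    (hY0int : Integrable Y0 μ) (hY1int : Integrable Y1 μ)
    (hindep : IndepFun Z (fun ω => (Y0 ω, Y1 ω, D0 ω, D1 ω)) μ)
    (hmono : ∀ ω, D0 ω ≤ D1 ω)
    (hD : ∀ ω, D ω = if Z ω = 1 then D1 ω else D0 ω)
    (hY : ∀ ω, Y ω = if D ω = 1 then Y1 ω else Y0 ω)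
    (hZ1 : 0 < μ {ω | Z ω = 1}) (hZ0 : 0 < μ {ω | Z ω = 0}) :
    condMean μ {ω | D0 ω < D1 ω} (fun ω => Y1 ω - Y0 ω) =
      (condMean μ {ω | Z ω = 1} Y - condMean μ {ω | Z ω = 0} Y) /
        (condMean μ {ω | Z ω = 1} D - condMean μ {ω | Z ω = 0} D) := by
  have hW : Measurable fun ω => (Y0 ω, Y1 ω, D0 ω, D1 ω) := by fun_prop
  have hne_one : ∀ ω, Z ω = 0 → Z ω ≠ 1 := fun ω hω => by simp [hω]
  have hY₁ : condMean μ {ω | Z ω = 1} Y = ∫ ω, Y0 ω + D1 ω * (Y1 ω - Y0 ω) ∂μ :=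
    condMean_preimage_eq_integral_comp (S := {1}) (f := Y) hZ (measurableSet_singleton 1) hW
      (g := fun p : ℝ × ℝ × ℝ × ℝ => p.1 + p.2.2.2 * (p.2.1 - p.1)) (by fun_prop) hindep
      hZ1.ne' fun ω (hω : Z ω = 1) => by rw [hY, hD, if_pos hω, ite_eq_add_mul_sub (hD1bin ω)]
  have hY₀ : condMean μ {ω | Z ω = 0} Y = ∫ ω, Y0 ω + D0 ω * (Y1 ω - Y0 ω) ∂μ :=
    condMean_preimage_eq_integral_comp (S := {0}) (f := Y) hZ (measurableSet_singleton 0) hW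
      (g := fun p : ℝ × ℝ × ℝ × ℝ => p.1 + p.2.2.1 * (p.2.1 - p.1)) (by fun_prop) hindep
      hZ0.ne' fun ω (hω : Z ω = 0) => by
        rw [hY, hD, if_neg (hne_one ω hω), ite_eq_add_mul_sub (hD0bin ω)]
  have hD₁ : condMean μ {ω | Z ω = 1} D = ∫ ω, D1 ω ∂μ :=
    condMean_preimage_eq_integral_comp (S := {1}) (f := D) hZ (measurableSet_singleton 1) hW
      (g := fun p : ℝ × ℝ × ℝ × ℝ => p.2.2.2) (by fun_prop) hindep
      hZ1.ne' fun ω (hω : Z ω = 1) => by rw [hD, if_pos hω]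
  have hD₀ : condMean μ {ω | Z ω = 0} D = ∫ ω, D0 ω ∂μ :=
    condMean_preimage_eq_integral_comp (S := {0}) (f := D) hZ (measurableSet_singleton 0) hW
      (g := fun p : ℝ × ℝ × ℝ × ℝ => p.2.2.1) (by fun_prop) hindep
      hZ0.ne' fun ω (hω : Z ω = 0) => by rw [hD, if_neg (hne_one ω hω)]
  rw [hY₁, hY₀, hD₁, hD₀,
    integral_add_mul_sub_integral_add_mul_eq_setIntegral hD0bin hD1bin hD0 hD1 hmono
      (τ := fun ω => Y1 ω - Y0 ω) hY0int (hY1int.sub hY0int),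
    integral_sub_integral_eq_measureReal_lt hD0bin hD1bin hD0 hD1 hmono, condMean,
    measureReal_def]

/-- Conditional Wald identification formula for the additive local average treatment
effect (Abadie's Lemma 2.1), conditional on a fixed value of the covariates `X`. -/
theorem stmt_14 {Ω : Type*} [MeasurableSpace Ω] (μ : Measure Ω) [IsProbabilityMeasure μ]
    (Z D Y D0 D1 Y0 Y1 : Ω → ℝ)
    (hZbin : ∀ ω, Z ω = 0 ∨ Z ω = 1)
    (hD0bin : ∀ ω, D0 ω = 0 ∨ D0 ω = 1) (hD1bin : ∀ ω, D1 ω = 0 ∨ D1 ω = 1)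
    (hZ : Measurable Z) (hD0 : Measurable D0) (hD1 : Measurable D1)
    (hY0 : Measurable Y0) (hY1 : Measurable Y1)
    (hY0int : Integrable Y0 μ) (hY1int : Integrable Y1 μ)
    (hindep : IndepFun Z (fun ω => (Y0 ω, Y1 ω, D0 ω, D1 ω)) μ)
    (hmono : ∀ ω, D0 ω ≤ D1 ω)
    (hD : ∀ ω, D ω = if Z ω = 1 then D1 ω else D0 ω)
    (hY : ∀ ω, Y ω = if D ω = 1 then Y1 ω else Y0 ω)
    (hZ1 : 0 < μ {ω | Z ω = 1}) (hZ0 : 0 < μ {ω | Z ω = 0})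
    (hCO : 0 < μ {ω | D0 ω < D1 ω})
    (hrel : condMean μ {ω | Z ω = 1} D ≠ condMean μ {ω | Z ω = 0} D) :
    condMean μ {ω | D0 ω < D1 ω} (fun ω => Y1 ω - Y0 ω) =
      (condMean μ {ω | Z ω = 1} Y - condMean μ {ω | Z ω = 0} Y) /
        (condMean μ {ω | Z ω = 1} D - condMean μ {ω | Z ω = 0} D) :=
  stmt_14_general μ Z D Y D0 D1 Y0 Y1 hD0bin hD1bin hZ hD0 hD1 hY0 hY1 hY0int hY1int hindep hmono hD
    hY hZ1 hZ0
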